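/- Let C be a finite set with |C| ≥ 2, let {M_c}_{c∈C} be a POVM on ℂ^N, let {E_k}_{k∈K} be a finite Kraus family on ℂ^N with channel E, let ε > 0, and let ρ₁, …, ρ_m be density matrices on ℂ^N. For each i, set p_c^{(i)} := Tr[M_c E(ρ_i)], fix c*_i ∈ C with p_{c*_i}^{(i)} ≥ p_c^{(i)} for all c, and define ε_RLB(ρ_i) := min_{c ≠ c*_i} (1/2)(√(p_{c*_i}^{(i)}) − √(p_c^{(i)}))². Call index i ε-robust if every density matrix σ with 1 − F(ρ_i, σ) ≤ ε satisfies Tr[M_{c*_i} E(σ)] ≥ Tr[M_c E(σ)] for all c ≠ c*_i. Then the number of indices i with ε ≤ ε_RLB(ρ_i) is at most the number of ε-robust indices; consequently 1 − r/m ≤ RA, where r is the number of indices with ε > ε_RLB(ρ_i) and RA is the fraction of ε-robust indices. -/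

import Mathlib

open Matrix
open scoped ComplexOrder

/-- Positive-semidefinite square root of a matrix (zero if not PSD). -/
noncomputable def psdSqrt {N : ℕ} (A : Matrix (Fin N) (Fin N) ℂ) :
    Matrix (Fin N) (Fin N) ℂ :=
  open scoped Classical in
  if h : A.PosSemidef then
    (h.1.eigenvectorUnitary : Matrix (Fin N) (Fin N) ℂ) *
      diagonal ((↑) ∘ (Real.sqrt ·) ∘ h.1.eigenvalues) *
      (star h.1.eigenvectorUnitary : Matrix (Fin N) (Fin N) ℂ)
  else 0

/-- Root fidelity `Tr √(√ρ σ √ρ)`. -/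
noncomputable def rootFidelity {N : ℕ} (ρ σ : Matrix (Fin N) (Fin N) ℂ) : ℝ :=
  (psdSqrt (psdSqrt ρ * σ * psdSqrt ρ)).trace.re

/-- Fidelity `F(ρ,σ) = (Tr √(√ρ σ √ρ))²`. -/
noncomputable def fidelity {N : ℕ} (ρ σ : Matrix (Fin N) (Fin N) ℂ) : ℝ :=
  (rootFidelity ρ σ) ^ 2

/-- A density matrix: positive semidefinite with trace one. -/
def IsDensityMatrix {N : ℕ} (ρ : Matrix (Fin N) (Fin N) ℂ) : Prop :=
  ρ.PosSemidef ∧ ρ.trace = 1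

/-- A POVM: a family of PSD matrices summing to the identity. -/
def IsPOVM {N : ℕ} {C : Type*} [Fintype C] (M : C → Matrix (Fin N) (Fin N) ℂ) : Prop :=
  (∀ c, (M c).PosSemidef) ∧ ∑ c, M c = 1

/-- A Kraus family: `∑ Eₖᴴ Eₖ = I`. -/
def IsKrausFamily {N : ℕ} {K : Type*} [Fintype K] (E : K → Matrix (Fin N) (Fin N) ℂ) : Prop :=
  ∑ k, (E k)ᴴ * E k = 1

/-- The quantum channel associated with a Kraus family. -/
noncomputable def channel {N : ℕ} {K : Type*} [Fintype K]
    (E : K → Matrix (Fin N) (Fin N) ℂ) (σ : Matrix (Fin N) (Fin N) ℂ) :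
    Matrix (Fin N) (Fin N) ℂ :=
  ∑ k, E k * σ * (E k)ᴴ

/-- Minimum of `f` over all labels distinct from `cstar` (needs `|C| ≥ 2`). -/
noncomputable def minErase {C : Type*} [Fintype C] [DecidableEq C] {α : Type*} [LinearOrder α]
    (cstar : C) (h : 1 < Fintype.card C) (f : C → α) : α :=
  (Finset.univ.erase cstar).inf'
    ((Finset.erase_nonempty (Finset.mem_univ cstar)).mpr
      (Finset.one_lt_card_iff_nontrivial.mp (by simpa [Finset.card_univ] using h))) f

/-!
Pulling the POVM back through the channel, `Tr[M_c E(σ)] = Tr[N_c σ]` with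
`N_c = ∑ₖ Eₖᴴ M_c Eₖ`, again a POVM, so everything reduces to measuring `ρ` and `σ` with `N`.
By the Fuchs–Caves inequality the root fidelity `√F(ρ, σ)` is at most the Bhattacharyya
coefficient `∑_c √(p_c q_c)` of the two outcome distributions; this follows from a polar
decomposition of `√σ √ρ` and Cauchy–Schwarz for the trace form. If `σ` made some `c ≠ c*` at
least as likely as `c*`, an elementary estimate gives
`(∑_c √(p_c q_c))² < 1 - (√p_{c*} - √p_c)² / 2 ≤ 1 - ε`, contradicting `1 - F(ρ, σ) ≤ ε`.
So every certified index is robust, and the accuracy bound is counting.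
-/

open scoped MatrixOrder

namespace Matrix

variable {𝕜 n : Type*} [RCLike 𝕜] [Fintype n] [DecidableEq n]

lemma PosSemidef.trace_mul_nonneg {P Q : Matrix n n 𝕜} (hP : P.PosSemidef)
    (hQ : Q.PosSemidef) : 0 ≤ (P * Q).trace := by
  have hS : (CFC.sqrt P)ᴴ = CFC.sqrt P := (CFC.sqrt_nonneg P).posSemidef.1
  rw [← CFC.sqrt_mul_sqrt_self P hP.nonneg, mul_assoc, trace_mul_comm, mul_assoc]
  simpa [hS, mul_assoc] using (hQ.conjTranspose_mul_mul_same (CFC.sqrt P)).trace_nonneg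

lemma norm_trace_mul_conjTranspose_le (X Y : Matrix n n 𝕜) :
    ‖(X * Yᴴ).trace‖ ≤ √(RCLike.re (X * Xᴴ).trace) * √(RCLike.re (Y * Yᴴ).trace) := by
  let := toMatrixSeminormedAddCommGroup (1 : Matrix n n 𝕜) PosSemidef.one
  let := toMatrixInnerProductSpace (1 : Matrix n n 𝕜) PosSemidef.one
  have := norm_inner_le_norm (𝕜 := 𝕜) Y X
  rw [norm_eq_sqrt_re_inner (𝕜 := 𝕜) X, norm_eq_sqrt_re_inner (𝕜 := 𝕜) Y, mul_comm] at this
  change ‖(X * 1 * Yᴴ).trace‖ ≤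
    √(RCLike.re (X * 1 * Xᴴ).trace) * √(RCLike.re (Y * 1 * Yᴴ).trace) at this
  simpa only [mul_one] using this

lemma re_trace_mul_mul_conjTranspose_le (V : Matrix n n 𝕜) {P : Matrix n n 𝕜} (hP : P ≤ 1) :
    RCLike.re (V * P * Vᴴ).trace ≤ RCLike.re (V * Vᴴ).trace := by
  have h := ((le_iff.mp hP).mul_mul_conjTranspose_same V).trace_nonneg
  rw [mul_sub, sub_mul, mul_one, trace_sub, sub_nonneg] at h
  exact RCLike.re_le_re h

lemma exists_mul_conjTranspose_le_one_mul_eq_sqrt (M : Matrix n n 𝕜) :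
    ∃ U : Matrix n n 𝕜, U * Uᴴ ≤ 1 ∧ U * M = CFC.sqrt (Mᴴ * M) := by
  have hH : 0 ≤ Mᴴ * M := (posSemidef_conjTranspose_mul_self M).nonneg
  have hcont (f : ℝ → ℝ) : ContinuousOn f (spectrum ℝ (Mᴴ * M)) :=
    (Mᴴ * M).finite_real_spectrum.continuousOn f
  -- `(√0)⁻¹ = 0`, so `F` is the pseudo-inverse of `√(MᴴM)` and `F * Mᴴ` the polar factor.
  let F := cfc (fun t : ℝ => (√t)⁻¹) (Mᴴ * M)
  have hF : Fᴴ = F := (cfc_predicate (R := ℝ) _ _ : IsSelfAdjoint F).star_eq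
  have hFH : F * (Mᴴ * M) = cfc Real.sqrt (Mᴴ * M) := calc
    F * (Mᴴ * M) = F * cfc (fun t : ℝ => t) (Mᴴ * M) := by rw [cfc_id' ℝ (Mᴴ * M)]
    _ = cfc (fun t : ℝ => (√t)⁻¹ * t) (Mᴴ * M) := (cfc_mul _ _ _ (hcont _) (hcont _)).symm
    _ = cfc Real.sqrt (Mᴴ * M) := by simp only [inv_mul_eq_div, Real.div_sqrt]
  have hFHF : F * (Mᴴ * M) * F ≤ 1 := by
    rw [hFH, ← cfc_mul _ _ _ (hcont _) (hcont _)]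
    refine cfc_le_one _ _ fun t _ => ?_
    by_cases h : √t = 0
    · simp [h]
    · rw [mul_inv_cancel₀ h]
  refine ⟨F * Mᴴ, ?_, ?_⟩
  · simpa only [conjTranspose_mul, conjTranspose_conjTranspose, hF, mul_assoc] using hFHF
  · rw [mul_assoc, hFH, CFC.sqrt_eq_real_sqrt _ hH, cfcₙ_eq_cfc]

lemma re_trace_mul_mul_mul_mul_le {U A B W : Matrix n n 𝕜} (hU : U * Uᴴ ≤ 1)
    (hA : A.IsHermitian) (hB : B.IsHermitian) (hW : W.PosSemidef) :
    RCLike.re (U * B * W * A).trace ≤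
      √(RCLike.re (W * (A * A)).trace) * √(RCLike.re (W * (B * B)).trace) := by
  set R := CFC.sqrt W
  have hR : Rᴴ = R := (CFC.sqrt_nonneg W).posSemidef.1
  have hRR : R * R = W := CFC.sqrt_mul_sqrt_self W hW.nonneg
  have hsplit : (U * B * W * A).trace = (R * A * U * (R * B)ᴴ).trace := by
    rw [conjTranspose_mul, hB.eq, hR, trace_mul_comm _ A]
    simp only [mul_assoc]
    rw [trace_mul_comm R]
    simp only [mul_assoc, hRR]
  have hcycle {X : Matrix n n 𝕜} (hX : X.IsHermitian) :
      (R * X * (R * X)ᴴ).trace = (W * (X * X)).trace := by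
    rw [trace_mul_comm, conjTranspose_mul, hX.eq, hR, mul_assoc, ← mul_assoc R R X, hRR,
      trace_mul_comm, mul_assoc]
  have hX : RCLike.re (R * A * U * (R * A * U)ᴴ).trace ≤ RCLike.re (W * (A * A)).trace := by
    calc RCLike.re (R * A * U * (R * A * U)ᴴ).trace
        = RCLike.re (R * A * (U * Uᴴ) * (R * A)ᴴ).trace := by
          rw [conjTranspose_mul (R * A) U]
          simp only [mul_assoc]
      _ ≤ RCLike.re (R * A * (R * A)ᴴ).trace := re_trace_mul_mul_conjTranspose_le _ hU
      _ = RCLike.re (W * (A * A)).trace := by rw [hcycle hA]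
  calc RCLike.re (U * B * W * A).trace
      ≤ ‖(R * A * U * (R * B)ᴴ).trace‖ := hsplit ▸ RCLike.re_le_norm _
    _ ≤ √(RCLike.re (R * A * U * (R * A * U)ᴴ).trace) *
          √(RCLike.re (R * B * (R * B)ᴴ).trace) := norm_trace_mul_conjTranspose_le _ _
    _ ≤ _ := by rw [hcycle hB]; gcongr

end Matrix

lemma psdSqrt_eq_sqrt {N : ℕ} {A : Matrix (Fin N) (Fin N) ℂ} (hA : A.PosSemidef) :
    psdSqrt A = CFC.sqrt A := by
  rw [psdSqrt, dif_pos hA, CFC.sqrt_eq_real_sqrt A hA.nonneg, cfcₙ_eq_cfc, hA.1.cfc_eq,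
    IsHermitian.cfc, Unitary.conjStarAlgAut_apply]
  rfl

lemma posSemidef_psdSqrt {N : ℕ} (A : Matrix (Fin N) (Fin N) ℂ) : (psdSqrt A).PosSemidef := by
  by_cases hA : A.PosSemidef
  · rw [psdSqrt_eq_sqrt hA]
    exact (CFC.sqrt_nonneg A).posSemidef
  · rw [psdSqrt, dif_neg hA]
    exact .zero

lemma rootFidelity_nonneg {N : ℕ} (ρ σ : Matrix (Fin N) (Fin N) ℂ) : 0 ≤ rootFidelity ρ σ :=
  (Complex.nonneg_iff.mp (posSemidef_psdSqrt _).trace_nonneg).1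

lemma IsPOVM.sum_re_trace_mul_eq_one {N : ℕ} {C : Type*} [Fintype C]
    {W : C → Matrix (Fin N) (Fin N) ℂ} (hW : IsPOVM W) {ρ : Matrix (Fin N) (Fin N) ℂ}
    (hρ : IsDensityMatrix ρ) : ∑ c, (W c * ρ).trace.re = 1 := by
  rw [← Complex.re_sum, ← trace_sum, ← Finset.sum_mul, hW.2, one_mul, hρ.2, Complex.one_re]

/-- Fuchs–Caves inequality. -/
theorem rootFidelity_le_sum_sqrt_mul_sqrt {N : ℕ} {C : Type*} [Fintype C]
    {ρ σ : Matrix (Fin N) (Fin N) ℂ} (hρ : ρ.PosSemidef) (hσ : σ.PosSemidef)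
    {W : C → Matrix (Fin N) (Fin N) ℂ} (hW : IsPOVM W) :
    rootFidelity ρ σ ≤ ∑ c, √((W c * ρ).trace.re) * √((W c * σ).trace.re) := by
  set A := CFC.sqrt ρ
  set B := CFC.sqrt σ
  have hA : A.IsHermitian := (CFC.sqrt_nonneg ρ).posSemidef.1
  have hB : B.IsHermitian := (CFC.sqrt_nonneg σ).posSemidef.1
  have hAσA : (B * A)ᴴ * (B * A) = A * σ * A := by
    rw [conjTranspose_mul, hA.eq, hB.eq, mul_assoc, ← mul_assoc B,
      CFC.sqrt_mul_sqrt_self σ hσ.nonneg, ← mul_assoc]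
  have hAσA_psd : (A * σ * A).PosSemidef := by
    simpa only [hA.eq] using hσ.conjTranspose_mul_mul_same A
  obtain ⟨U, hU, hUBA⟩ := exists_mul_conjTranspose_le_one_mul_eq_sqrt (B * A)
  have hsum : U * (B * A) = ∑ c, U * B * W c * A := by
    rw [← Finset.sum_mul, ← Finset.mul_sum, hW.2, mul_one, mul_assoc]
  rw [rootFidelity, psdSqrt_eq_sqrt hρ, psdSqrt_eq_sqrt hAσA_psd, ← hAσA, ← hUBA, hsum,
    trace_sum, Complex.re_sum]
  gcongr with c
  simpa only [A, B, CFC.sqrt_mul_sqrt_self ρ hρ.nonneg, CFC.sqrt_mul_sqrt_self σ hσ.nonneg,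
    RCLike.re_to_complex]
    using re_trace_mul_mul_mul_mul_le hU hA hB (hW.1 c)

lemma sq_mul_add_mul_add_mul_lt {a b x y s t : ℝ} (hb : 0 ≤ b) (hx : 0 ≤ x) (hs : 0 ≤ s)
    (ht : 0 ≤ t) (hab : b < a) (hxy : x < y) (habs : a ^ 2 + b ^ 2 + s ^ 2 = 1)
    (hxyt : x ^ 2 + y ^ 2 + t ^ 2 = 1) :
    (a * x + b * y + s * t) ^ 2 < 1 - (a - b) ^ 2 / 2 := by
  -- `(a, b)` and `(x, y)` are oppositely ordered, so averaging them increases the pairing.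
  have hK : a * x + b * y < (a + b) * (x + y) / 2 := by nlinarith
  -- Cauchy–Schwarz for `((a + b) / √2, s)` and `((x + y) / √2, t)`.
  have hCS : ((a + b) * (x + y) / 2 + s * t) ^ 2 ≤
      (1 - (a - b) ^ 2 / 2) * (1 - (x - y) ^ 2 / 2) := by
    nlinarith [sq_nonneg ((a + b) * t - s * (x + y))]
  have hpos : 0 ≤ 1 - (a - b) ^ 2 / 2 := by nlinarith
  have h0 : 0 ≤ a * x + b * y + s * t := by
    have := hb.trans hab.le
    have := hx.trans hxy.le
    positivity
  calc (a * x + b * y + s * t) ^ 2 < ((a + b) * (x + y) / 2 + s * t) ^ 2 := by gcongr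
    _ ≤ (1 - (a - b) ^ 2 / 2) * (1 - (x - y) ^ 2 / 2) := hCS
    _ ≤ 1 - (a - b) ^ 2 / 2 := mul_le_of_le_one_right hpos (by nlinarith)

theorem sq_sum_sqrt_mul_sqrt_lt {C : Type*} [Fintype C] {p q : C → ℝ} (hp0 : ∀ c, 0 ≤ p c)
    (hq0 : ∀ c, 0 ≤ q c) (hp1 : ∑ c, p c = 1) (hq1 : ∑ c, q c = 1) {c₀ c : C} (hc : c ≠ c₀)
    (hp : p c < p c₀) (hq : q c₀ < q c) :
    (∑ i, √(p i) * √(q i)) ^ 2 < 1 - (√(p c₀) - √(p c)) ^ 2 / 2 := by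
  classical
  set rest := (Finset.univ.erase c₀).erase c
  have hsplit (f : C → ℝ) : ∑ i, f i = f c₀ + f c + ∑ i ∈ rest, f i := by
    rw [add_assoc, Finset.add_sum_erase _ f (Finset.mem_erase.mpr ⟨hc, Finset.mem_univ c⟩),
      Finset.add_sum_erase _ f (Finset.mem_univ c₀)]
  have hle : ∑ i, √(p i) * √(q i) ≤ √(p c₀) * √(q c₀) + √(p c) * √(q c) +
      √(∑ i ∈ rest, p i) * √(∑ i ∈ rest, q i) := by
    rw [hsplit]
    gcongr
    exact Real.sum_sqrt_mul_sqrt_le rest hp0 hq0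
  have hlt := sq_mul_add_mul_add_mul_lt (Real.sqrt_nonneg (p c)) (Real.sqrt_nonneg (q c₀))
    (Real.sqrt_nonneg (∑ i ∈ rest, p i)) (Real.sqrt_nonneg (∑ i ∈ rest, q i))
    (Real.sqrt_lt_sqrt (hp0 c) hp) (Real.sqrt_lt_sqrt (hq0 c₀) hq)
    (by simp only [Real.sq_sqrt (hp0 _), Real.sq_sqrt (Finset.sum_nonneg fun i _ => hp0 i)]
        linarith [hsplit p])
    (by simp only [Real.sq_sqrt (hq0 _), Real.sq_sqrt (Finset.sum_nonneg fun i _ => hq0 i)]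
        linarith [hsplit q])
  exact (pow_le_pow_left₀ (Finset.sum_nonneg fun i _ => by positivity) hle 2).trans_lt hlt

theorem fidelity_lt_of_lt_of_lt {N : ℕ} {C : Type*} [Fintype C]
    {W : C → Matrix (Fin N) (Fin N) ℂ} (hW : IsPOVM W) {ρ σ : Matrix (Fin N) (Fin N) ℂ}
    (hρ : IsDensityMatrix ρ) (hσ : IsDensityMatrix σ) {c₀ c : C} (hc : c ≠ c₀)
    (hp : (W c * ρ).trace.re < (W c₀ * ρ).trace.re)
    (hq : (W c₀ * σ).trace.re < (W c * σ).trace.re) :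
    fidelity ρ σ < 1 - (√(W c₀ * ρ).trace.re - √(W c * ρ).trace.re) ^ 2 / 2 := by
  have hprob {τ : Matrix (Fin N) (Fin N) ℂ} (hτ : τ.PosSemidef) (c : C) : 0 ≤ (W c * τ).trace.re :=
    (Complex.nonneg_iff.mp ((hW.1 c).trace_mul_nonneg hτ)).1
  calc fidelity ρ σ ≤ (∑ c, √((W c * ρ).trace.re) * √((W c * σ).trace.re)) ^ 2 :=
        pow_le_pow_left₀ (rootFidelity_nonneg ρ σ)
          (rootFidelity_le_sum_sqrt_mul_sqrt hρ.1 hσ.1 hW) 2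
    _ < _ := sq_sum_sqrt_mul_sqrt_lt (hprob hρ.1) (hprob hσ.1) (hW.sum_re_trace_mul_eq_one hρ)
        (hW.sum_re_trace_mul_eq_one hσ) hc hp hq

theorem trace_mul_le_of_one_sub_fidelity_le {N : ℕ} {C : Type*} [Fintype C]
    {W : C → Matrix (Fin N) (Fin N) ℂ} (hW : IsPOVM W) {ρ σ : Matrix (Fin N) (Fin N) ℂ}
    (hρ : IsDensityMatrix ρ) (hσ : IsDensityMatrix σ) {c₀ c : C} (hc : c ≠ c₀)
    (hmax : (W c * ρ).trace.re ≤ (W c₀ * ρ).trace.re) {ε : ℝ} (hε : 0 < ε)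
    (hgap : ε ≤ 1 / 2 * (√(W c₀ * ρ).trace.re - √(W c * ρ).trace.re) ^ 2)
    (hF : 1 - fidelity ρ σ ≤ ε) :
    (W c * σ).trace ≤ (W c₀ * σ).trace := by
  have him (c : C) : (W c * σ).trace.im = 0 :=
    (Complex.nonneg_iff.mp ((hW.1 c).trace_mul_nonneg hσ.1)).2.symm
  refine Complex.le_def.mpr ⟨?_, by rw [him, him]⟩
  by_contra! hflip
  have hp : (W c * ρ).trace.re < (W c₀ * ρ).trace.re := hmax.lt_of_ne fun h => by
    rw [h, sub_self] at hgap
    linarith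
  linarith [fidelity_lt_of_lt_of_lt hW hρ hσ hc hp hflip]

noncomputable def adjointChannel {N : ℕ} {K : Type*} [Fintype K]
    (E : K → Matrix (Fin N) (Fin N) ℂ) (X : Matrix (Fin N) (Fin N) ℂ) :
    Matrix (Fin N) (Fin N) ℂ :=
  ∑ k, (E k)ᴴ * X * E k

lemma trace_mul_channel {N : ℕ} {K : Type*} [Fintype K] (E : K → Matrix (Fin N) (Fin N) ℂ)
    (X σ : Matrix (Fin N) (Fin N) ℂ) :
    (X * channel E σ).trace = (adjointChannel E X * σ).trace := by
  simp only [channel, adjointChannel, Finset.mul_sum, Finset.sum_mul, trace_sum]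
  refine Finset.sum_congr rfl fun k _ => ?_
  simp only [← mul_assoc]
  rw [trace_mul_comm]
  simp only [← mul_assoc]

lemma IsPOVM.adjointChannel {N : ℕ} {C K : Type*} [Fintype C] [Fintype K]
    {M : C → Matrix (Fin N) (Fin N) ℂ} (hM : IsPOVM M) {E : K → Matrix (Fin N) (Fin N) ℂ}
    (hE : IsKrausFamily E) : IsPOVM fun c => adjointChannel E (M c) := by
  refine ⟨fun c => posSemidef_sum _ fun k _ => (hM.1 c).conjTranspose_mul_mul_same (E k), ?_⟩
  simp only [_root_.adjointChannel]
  rw [Finset.sum_comm]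
  simp only [← Finset.sum_mul, ← Finset.mul_sum, hM.2, mul_one]
  exact hE

lemma minErase_le {C : Type*} [Fintype C] [DecidableEq C] {α : Type*} [LinearOrder α]
    (cstar : C) (h : 1 < Fintype.card C) (f : C → α) {c : C} (hc : c ≠ cstar) :
    minErase cstar h f ≤ f c :=
  Finset.inf'_le _ (Finset.mem_erase.mpr ⟨hc, Finset.mem_univ c⟩)

open scoped Classical in
/-- **Soundness of the under-approximate robust accuracy.** Every index certified by
the robustness lower bound is ε-robust, hence the under-approximate robust accuracy
`URA = 1 − r/m` is at most the true robust accuracy `RA`. -/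
theorem under_robust_accuracy_sound
    {N m : ℕ} {C K : Type*} [Fintype C] [DecidableEq C] [Fintype K]
    (hC : 1 < Fintype.card C) (hm : 0 < m)
    (M : C → Matrix (Fin N) (Fin N) ℂ) (hM : IsPOVM M)
    (E : K → Matrix (Fin N) (Fin N) ℂ) (hE : IsKrausFamily E)
    (ε : ℝ) (hε : 0 < ε)
    (ρ : Fin m → Matrix (Fin N) (Fin N) ℂ) (hρ : ∀ i, IsDensityMatrix (ρ i))
    (p : Fin m → C → ℝ) (hp : ∀ i c, ((p i c : ℂ)) = (M c * channel E (ρ i)).trace)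
    (cstar : Fin m → C) (hcstar : ∀ i c, p i c ≤ p i (cstar i))
    (εRLB : Fin m → ℝ)
    (hRLB : ∀ i, εRLB i = minErase (cstar i) hC
      fun c => (1 / 2) * (Real.sqrt (p i (cstar i)) - Real.sqrt (p i c)) ^ 2)
    (Robust : Fin m → Prop)
    (hRobust : ∀ i, Robust i ↔
      ∀ σ : Matrix (Fin N) (Fin N) ℂ, IsDensityMatrix σ → 1 - fidelity (ρ i) σ ≤ ε →
        ∀ c, c ≠ cstar i →
          (M c * channel E σ).trace ≤ (M (cstar i) * channel E σ).trace) :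
    (Finset.univ.filter fun i => ε ≤ εRLB i).card ≤
        (Finset.univ.filter fun i => Robust i).card ∧
      1 - ((Finset.univ.filter fun i => ε > εRLB i).card : ℝ) / m ≤
        ((Finset.univ.filter fun i => Robust i).card : ℝ) / m := by
  have hpW (i : Fin m) (c : C) : p i c = (adjointChannel E (M c) * ρ i).trace.re := by
    rw [← trace_mul_channel, ← hp, Complex.ofReal_re]
  have hsound (i : Fin m) (hi : ε ≤ εRLB i) : Robust i := by
    refine (hRobust i).2 fun σ hσ hF c hc => ?_
    rw [trace_mul_channel, trace_mul_channel]
    refine trace_mul_le_of_one_sub_fidelity_le (hM.adjointChannel hE) (hρ i) hσ hc ?_ hε ?_ hF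
    · simpa only [hpW] using hcstar i c
    · rw [hRLB i] at hi
      simpa only [hpW] using hi.trans (minErase_le (cstar i) hC _ hc)
  have hcard : (Finset.univ.filter fun i => ε ≤ εRLB i).card ≤
      (Finset.univ.filter fun i => Robust i).card :=
    Finset.card_le_card (Finset.monotone_filter_right _ fun i _ => hsound i)
  refine ⟨hcard, ?_⟩
  have hsplit := Finset.card_filter_add_card_filter_not (s := Finset.univ) (fun i => ε ≤ εRLB i)
  simp only [not_le, Finset.card_univ, Fintype.card_fin] at hsplit
  rw [one_sub_div (by positivity), div_le_div_iff_of_pos_right (by positivity)]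
  have hm_eq : (m : ℝ) = _ := congrArg Nat.cast hsplit.symm
  push_cast at hm_eq
  linarith [(Nat.cast_le (α := ℝ)).mpr hcard]
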